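/- If R is a weakly Noetherian commutative semiring, then the set of minimal k-prime ideals of R (minimal elements, with respect to inclusion, of the set of k-prime ideals of R) is finite. -/

import Mathlib

/-!
By Noetherian induction on k-ideals, every k-ideal `I` contains a finite product of k-primes
containing `I`: a proper k-ideal that is not k-prime contains a product of two strictly larger
k-ideals, namely the k-closures of `I ⊔ A` and `I ⊔ B`. For `I = 0` this gives k-primes
`P₁, …, Pₙ` with `P₁ ⋯ Pₙ = 0`. Passing to k-closures shows that a k-prime is prime, so every
k-prime contains some `Pᵢ`, and a minimal one is equal to it.
-/

variable {R : Type*} [CommSemiring R]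

/-- An ideal `I` of a commutative semiring is a *k-ideal* (subtractive ideal) if
`a ∈ I` and `a + b ∈ I` imply `b ∈ I`. -/
def IsKIdeal (I : Ideal R) : Prop :=
  ∀ a b : R, a ∈ I → a + b ∈ I → b ∈ I

/-- A *k-prime* ideal: a proper k-ideal `P` such that for all k-ideals `I`, `J`,
`I * J ≤ P` implies `I ≤ P` or `J ≤ P`. -/
def IsKPrime (P : Ideal R) : Prop :=
  IsKIdeal P ∧ P ≠ ⊤ ∧
    ∀ I J : Ideal R, IsKIdeal I → IsKIdeal J → I * J ≤ P → I ≤ P ∨ J ≤ P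

/-- A commutative semiring is *weakly Noetherian* if every ascending chain of
k-ideals stabilizes. -/
def WeaklyNoetherian (R : Type*) [CommSemiring R] : Prop :=
  ∀ f : ℕ → Ideal R, (∀ n, IsKIdeal (f n)) → Monotone f →
    ∃ N : ℕ, ∀ n : ℕ, N ≤ n → f n = f N

def kClosure (J : Ideal R) : Ideal R where
  carrier := {x | ∃ a ∈ J, a + x ∈ J}
  zero_mem' := ⟨0, J.zero_mem, by simp⟩
  add_mem' := by
    rintro x y ⟨a, ha, hax⟩ ⟨b, hb, hby⟩
    refine ⟨a + b, add_mem ha hb, ?_⟩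
    convert add_mem hax hby using 1
    ring
  smul_mem' := by
    rintro r x ⟨a, ha, hax⟩
    refine ⟨r * a, J.mul_mem_left r ha, ?_⟩
    rw [smul_eq_mul, ← mul_add]
    exact J.mul_mem_left r hax

theorem le_kClosure (J : Ideal R) : J ≤ kClosure J :=
  fun x hx => ⟨0, J.zero_mem, by rwa [zero_add]⟩

theorem isKIdeal_kClosure (J : Ideal R) : IsKIdeal (kClosure J) := by
  rintro x y ⟨a, ha, hax⟩ ⟨b, hb, hbxy⟩
  refine ⟨a + x + b, add_mem hax hb, ?_⟩
  convert add_mem hbxy ha using 1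
  ring

/-- Expanding `(a + x) * (b + y)` with `a ∈ J`, `b ∈ K`, the k-property of `I` strips off
`a * b`, then `x * b` and `a * y`, leaving `x * y`. -/
theorem kClosure_mul_kClosure_le {I J K : Ideal R} (hI : IsKIdeal I) (hJK : J * K ≤ I) :
    kClosure J * kClosure K ≤ I := by
  rw [Ideal.mul_le]
  rintro x ⟨a, ha, hax⟩ y ⟨b, hb, hby⟩
  have hab : a * b ∈ I := hJK (Ideal.mul_mem_mul ha hb)
  have hxb : x * b ∈ I := hI _ _ hab (by rw [← add_mul]; exact hJK (Ideal.mul_mem_mul hax hb))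
  have hay : a * y ∈ I := hI _ _ hab (by rw [← mul_add]; exact hJK (Ideal.mul_mem_mul ha hby))
  refine hI _ _ (add_mem (add_mem hab hxb) hay) ?_
  convert hJK (Ideal.mul_mem_mul hax hby) using 1
  ring

theorem isKIdeal_bot : IsKIdeal (⊥ : Ideal R) := by
  intro a b ha hab
  rw [Ideal.mem_bot] at ha hab ⊢
  rwa [ha, zero_add] at hab

theorem IsKPrime.le_or_le_of_mul_le {P I J : Ideal R} (hP : IsKPrime P) (h : I * J ≤ P) :
    I ≤ P ∨ J ≤ P :=
  (hP.2.2 _ _ (isKIdeal_kClosure I) (isKIdeal_kClosure J) (kClosure_mul_kClosure_le hP.1 h)).imp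
    (le_kClosure I).trans (le_kClosure J).trans

theorem IsKPrime.isPrime {P : Ideal R} (hP : IsKPrime P) : P.IsPrime where
  ne_top' := hP.2.1
  mem_or_mem' {a b} hab := by
    have h : Ideal.span {a} * Ideal.span {b} ≤ P := by
      rwa [Ideal.span_singleton_mul_span_singleton, Ideal.span_singleton_le_iff_mem]
    simpa only [Ideal.span_singleton_le_iff_mem] using hP.le_or_le_of_mul_le h

theorem IsKIdeal.exists_lt_lt_mul_le_of_not_isKPrime {I : Ideal R} (hI : IsKIdeal I)
    (htop : I ≠ ⊤) (hI' : ¬ IsKPrime I) :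
    ∃ A B : Ideal R, IsKIdeal A ∧ IsKIdeal B ∧ I < A ∧ I < B ∧ A * B ≤ I := by
  obtain ⟨A, B, hAB, hAI, hBI⟩ : ∃ A B : Ideal R, A * B ≤ I ∧ ¬ A ≤ I ∧ ¬ B ≤ I := by
    by_contra! h
    exact hI' ⟨hI, htop, fun A B _ _ hAB => or_iff_not_imp_left.2 (h A B hAB)⟩
  have lt_kClosure_sup {C : Ideal R} (hCI : ¬ C ≤ I) : I < kClosure (I ⊔ C) :=
    (le_sup_left.trans (le_kClosure _)).lt_of_not_ge fun h =>
      hCI (le_sup_right.trans ((le_kClosure _).trans h))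
  refine ⟨kClosure (I ⊔ A), kClosure (I ⊔ B), isKIdeal_kClosure _, isKIdeal_kClosure _,
    lt_kClosure_sup hAI, lt_kClosure_sup hBI, kClosure_mul_kClosure_le hI ?_⟩
  rw [Ideal.sup_mul, Ideal.mul_sup, Ideal.mul_sup]
  exact sup_le (sup_le Ideal.mul_le_left Ideal.mul_le_left) (sup_le Ideal.mul_le_right hAB)

theorem WeaklyNoetherian.wellFoundedGT (h : WeaklyNoetherian R) :
    WellFoundedGT {I : Ideal R // IsKIdeal I} := by
  refine wellFoundedGT_iff_monotone_chain_condition.2 fun f => ?_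
  obtain ⟨N, hN⟩ := h (fun n => (f n).1) (fun n => (f n).2) fun m n hmn => f.mono hmn
  exact ⟨N, fun n hn => Subtype.ext (hN n hn).symm⟩

theorem WeaklyNoetherian.exists_kPrime_multiset_prod_le (h : WeaklyNoetherian R) {I : Ideal R}
    (hI : IsKIdeal I) : ∃ s : Multiset (Ideal R), (∀ P ∈ s, IsKPrime P ∧ I ≤ P) ∧ s.prod ≤ I := by
  suffices ∀ J : {J : Ideal R // IsKIdeal J},
      ∃ s : Multiset (Ideal R), (∀ P ∈ s, IsKPrime P ∧ J.1 ≤ P) ∧ s.prod ≤ J.1 from this ⟨I, hI⟩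
  have := h.wellFoundedGT
  intro J
  induction J using WellFoundedGT.induction with | _ J IH => ?_
  obtain ⟨J, hJ⟩ := J
  by_cases htop : J = ⊤
  · exact ⟨0, by simp, by simp [htop]⟩
  by_cases hprime : IsKPrime J
  · exact ⟨{J}, by simpa using hprime, by simp⟩
  obtain ⟨A, B, hA, hB, hJA, hJB, hAB⟩ := hJ.exists_lt_lt_mul_le_of_not_isKPrime htop hprime
  obtain ⟨s, hs, hsA⟩ := IH ⟨A, hA⟩ hJA
  obtain ⟨t, ht, htB⟩ := IH ⟨B, hB⟩ hJB
  refine ⟨s + t, ?_, ?_⟩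
  · simp only [Multiset.mem_add]
    rintro P (hP | hP)
    exacts [(hs P hP).imp_right hJA.le.trans, (ht P hP).imp_right hJB.le.trans]
  · rw [Multiset.prod_add]
    exact (Ideal.mul_mono hsA htB).trans hAB

/-- In a weakly Noetherian commutative semiring, the set of minimal k-prime ideals
is finite. -/
theorem finite_minimal_kPrimes (R : Type*) [CommSemiring R] (h : WeaklyNoetherian R) :
    {P : Ideal R | IsKPrime P ∧ ∀ Q : Ideal R, IsKPrime Q → Q ≤ P → Q = P}.Finite := by
  classical
  obtain ⟨s, hs, hprod⟩ := h.exists_kPrime_multiset_prod_le isKIdeal_bot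
  refine s.toFinset.finite_toSet.subset fun P ⟨hP, hmin⟩ => ?_
  obtain ⟨Q, hQs, hQP⟩ := hP.isPrime.multiset_prod_le.1 (hprod.trans bot_le)
  rw [← hmin Q (hs Q hQs).1 hQP]
  simpa using hQs
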